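/- arXiv:1308.5589 — 4 statements merged into one kernel-verified Lean document; each statement's English description precedes it below -/
import Mathlib

section
/- For all real numbers a, b > 0, the integral from 0 to infinity of e^{-a r} J_0(sqrt(b r)) dr equals (1/a) e^{-b/(4a)}, where J_0 is the Bessel function of the first kind of order zero. -/
/-!
Integrating the exponential series of `exp (i x cos θ)` termwise against the moments of `cos`
gives `J₀(x) = ∑ (-1)^m (x/2)^(2m) / (m!)^2`, so `J₀(√(b r))` is a power series in `r`.
Its Laplace transform can be taken termwise because `∫₀^∞ e^{-a r} r^m dr = m! / a^(m+1)` makes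
the majorant `∑ (b/4)^m r^m / (m!)^2` transform to the convergent `(1/a) ∑ (b/4a)^m / m!`;
the same computation with signs gives `(1/a) ∑ (-b/4a)^m / m! = (1/a) e^{-b/4a}`.
-/

open MeasureTheory Real Complex

/-- Bessel function of the first kind of order zero, defined by its integral
representation `J₀(x) = (1/(2π)) ∫_0^{2π} e^{i x cos θ} dθ`. -/
noncomputable def besselJ0 (x : ℝ) : ℂ :=
  (1 / (2 * π)) * ∫ θ in (0:ℝ)..(2 * π), Complex.exp (Complex.I * x * Real.cos θ)

open scoped Nat

theorem integral_cos_pow_odd (m : ℕ) : ∫ θ in (0:ℝ)..2 * π, Real.cos θ ^ (2 * m + 1) = 0 := by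
  induction m with
  | zero => simp
  | succ m ih =>
    rw [show 2 * (m + 1) + 1 = 2 * m + 1 + 2 by ring, integral_cos_pow]
    simp [ih]

theorem integral_cos_pow_even (m : ℕ) :
    ∫ θ in (0:ℝ)..2 * π, Real.cos θ ^ (2 * m) = 2 * π * (2 * m)! / (4 ^ m * (m ! : ℝ) ^ 2) := by
  induction m with
  | zero => simp
  | succ m ih =>
    rw [show 2 * (m + 1) = 2 * m + 2 by ring, integral_cos_pow, ih,
      Nat.factorial_succ, show 2 * m + 2 = 2 * m + 1 + 1 by ring, Nat.factorial_succ,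
      Nat.factorial_succ]
    simp only [Real.sin_two_pi, Real.sin_zero]
    push_cast
    field_simp
    ring

theorem hasSum_intervalIntegral_cexp {f : ℝ → ℂ} (hf : Continuous f) (a b : ℝ) :
    HasSum (fun n : ℕ => ∫ t in a..b, f t ^ n / n !) (∫ t in a..b, cexp (f t)) := by
  refine intervalIntegral.hasSum_integral_of_dominated_convergence
    (fun n t => ‖f t‖ ^ n / n !) (fun n => by fun_prop) (fun n => ?_)
    (.of_forall fun t _ => Real.summable_pow_div_factorial _) ?_
    (.of_forall fun t _ => Complex.exp_eq_exp_ℂ ▸ NormedSpace.expSeries_div_hasSum_exp (f t))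
  · exact .of_forall fun t _ => by simp
  · have hsum : (fun t => ∑' n : ℕ, ‖f t‖ ^ n / n !) = fun t => Real.exp ‖f t‖ := by
      ext t
      rw [Real.exp_eq_exp_ℝ, (NormedSpace.expSeries_div_hasSum_exp ‖f t‖).tsum_eq]
    rw [hsum]
    exact (by fun_prop : Continuous fun t => Real.exp ‖f t‖).intervalIntegrable a b

theorem hasSum_besselJ0 (x : ℝ) :
    HasSum (fun m : ℕ => (-1) ^ m * ((x : ℂ) / 2) ^ (2 * m) / (m ! : ℂ) ^ 2) (besselJ0 x) := by
  have hmoment : ∀ n : ℕ, ∫ θ in (0:ℝ)..2 * π, (I * x * Real.cos θ) ^ n / n !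
      = (I * x) ^ n / n ! * ((∫ θ in (0:ℝ)..2 * π, Real.cos θ ^ n : ℝ) : ℂ) := by
    intro n
    rw [← intervalIntegral.integral_ofReal, ← intervalIntegral.integral_const_mul]
    congr 1 with θ
    push_cast
    ring
  have hseries := (hasSum_intervalIntegral_cexp (f := fun θ => I * x * Real.cos θ)
    (by fun_prop) 0 (2 * π)).mul_left (1 / (2 * (π : ℂ)))
  simp only [hmoment] at hseries
  have hodd : ∀ n ∉ Set.range (2 * · : ℕ → ℕ), 1 / (2 * (π : ℂ)) *
      ((I * x) ^ n / n ! * ((∫ θ in (0:ℝ)..2 * π, Real.cos θ ^ n : ℝ) : ℂ)) = 0 := by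
    intro n hn
    obtain ⟨k, rfl⟩ : Odd n := Nat.not_even_iff_odd.mp fun ⟨k, hk⟩ => hn ⟨k, by simp only; omega⟩
    simp [integral_cos_pow_odd]
  refine (((mul_right_injective₀ two_ne_zero).hasSum_iff hodd).mpr hseries).congr_fun
    fun m => ?_
  rw [Function.comp_apply, integral_cos_pow_even]
  simp only [pow_mul, mul_pow, I_sq]
  push_cast
  field_simp [Nat.factorial_ne_zero]
  rw [← mul_pow]
  norm_num

theorem integrableOn_exp_neg_mul_mul_pow {a : ℝ} (ha : 0 < a) (m : ℕ) :
    IntegrableOn (fun r => Real.exp (-a * r) * r ^ m) (Set.Ioi 0) := by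
  refine (integrableOn_rpow_mul_exp_neg_mul_rpow (s := m) (neg_one_lt_zero.trans_le m.cast_nonneg)
    one_pos ha).congr_fun (fun r _ => ?_) measurableSet_Ioi
  simp only [Real.rpow_one, Real.rpow_natCast]
  ring

theorem integral_exp_neg_mul_mul_pow {a : ℝ} (ha : 0 < a) (m : ℕ) :
    ∫ r in Set.Ioi 0, Real.exp (-a * r) * r ^ m = m ! / a ^ (m + 1) := by
  calc ∫ r in Set.Ioi 0, Real.exp (-a * r) * r ^ m
      = ∫ r in Set.Ioi 0, r ^ ((m + 1 : ℝ) - 1) * Real.exp (-(a * r)) := by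
        refine setIntegral_congr_fun measurableSet_Ioi fun r _ => ?_
        rw [add_sub_cancel_right, Real.rpow_natCast, neg_mul, mul_comm]
    _ = (1 / a) ^ (m + 1 : ℝ) * Real.Gamma (m + 1) :=
        integral_rpow_mul_exp_neg_mul_Ioi (by positivity) ha
    _ = m ! / a ^ (m + 1) := by
        rw [← Nat.cast_succ, Real.rpow_natCast, Nat.cast_succ, Real.Gamma_nat_eq_factorial,
          one_div, inv_pow, inv_mul_eq_div]

theorem hasSum_integral_exp_neg_mul_mul_of_hasSum_pow {a : ℝ} (ha : 0 < a) {c : ℕ → ℂ}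
    {f : ℝ → ℂ} (hf : ∀ r ∈ Set.Ioi (0:ℝ), HasSum (fun m => c m * (r : ℂ) ^ m) (f r))
    (hc : Summable fun m => ‖c m‖ * m ! / a ^ (m + 1)) :
    HasSum (fun m => c m * m ! / a ^ (m + 1))
      (∫ r in Set.Ioi 0, (Real.exp (-a * r) : ℂ) * f r) := by
  set F : ℕ → ℝ → ℂ := fun m r => c m * (Real.exp (-a * r) * r ^ m : ℝ)
  have hF_int : ∀ m, IntegrableOn (F m) (Set.Ioi 0) := fun m =>
    (integrableOn_exp_neg_mul_mul_pow ha m).ofReal.const_mul (c m)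
  have hF_integral : ∀ m, ∫ r in Set.Ioi 0, F m r = c m * m ! / a ^ (m + 1) := fun m => by
    rw [integral_const_mul, integral_complex_ofReal, integral_exp_neg_mul_mul_pow ha]
    push_cast
    ring
  have hF_norm : ∀ m, ∫ r in Set.Ioi 0, ‖F m r‖ = ‖c m‖ * m ! / a ^ (m + 1) := fun m => by
    rw [mul_div_assoc, ← integral_exp_neg_mul_mul_pow ha, ← integral_const_mul]
    refine setIntegral_congr_fun measurableSet_Ioi fun r (hr : 0 < r) => ?_
    rw [norm_mul, Complex.norm_real, Real.norm_of_nonneg (by positivity)]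
  have hF_sum : ∀ r ∈ Set.Ioi (0:ℝ), ∑' m, F m r = Real.exp (-a * r) * f r := fun r hr => by
    refine ((hf r hr).mul_left (Real.exp (-a * r) : ℂ)).congr_fun (fun m => ?_) |>.tsum_eq
    simp only [F]
    push_cast
    ring
  have := hasSum_integral_of_summable_integral_norm hF_int (by simpa only [hF_norm] using hc)
  simpa only [hF_integral, setIntegral_congr_fun measurableSet_Ioi hF_sum] using this

theorem hasSum_besselJ0_sqrt_mul {b r : ℝ} (hbr : 0 ≤ b * r) :
    HasSum (fun m : ℕ => (-(b : ℂ) / 4) ^ m / (m ! : ℂ) ^ 2 * (r : ℂ) ^ m)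
      (besselJ0 (√(b * r))) := by
  refine (hasSum_besselJ0 _).congr_fun fun m => ?_
  have hsq : ((√(b * r) : ℝ) : ℂ) ^ 2 = b * r := by
    rw [← ofReal_pow, Real.sq_sqrt hbr, ofReal_mul]
  rw [pow_mul, div_pow _ (2 : ℂ), hsq, neg_div, neg_pow ((b : ℂ) / 4)]
  ring

/-- For all `a, b > 0`, `∫_0^∞ e^{-a r} J₀(√(b r)) dr = (1/a) e^{-b/(4a)}`. -/
theorem integral_exp_mul_besselJ0 (a b : ℝ) (ha : 0 < a) (hb : 0 < b) :
    ∫ r in Set.Ioi (0:ℝ), (Real.exp (-a * r) : ℂ) * besselJ0 (Real.sqrt (b * r))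
      = (1 / a) * Real.exp (-b / (4 * a)) := by
  have hterm : ∀ m : ℕ, (-(b : ℂ) / 4) ^ m / (m ! : ℂ) ^ 2 * m ! / a ^ (m + 1)
      = 1 / a * (((-b / (4 * a) : ℝ) : ℂ) ^ m / m !) := fun m => by
    push_cast
    field_simp [Nat.factorial_ne_zero]
    ring
  have hnorm : ∀ m : ℕ, ‖(-(b : ℂ) / 4) ^ m / (m ! : ℂ) ^ 2‖ * m ! / a ^ (m + 1)
      = 1 / a * ((b / (4 * a)) ^ m / m !) := fun m => by
    simp only [norm_div, norm_pow, norm_neg, Complex.norm_real, Complex.norm_natCast,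
      Real.norm_of_nonneg hb.le, Complex.norm_ofNat, div_pow, mul_pow]
    field_simp [Nat.factorial_ne_zero]
    ring
  have hlaplace := hasSum_integral_exp_neg_mul_mul_of_hasSum_pow ha
    (fun r hr => hasSum_besselJ0_sqrt_mul (mul_pos hb hr).le)
    (by simpa only [hnorm] using (Real.summable_pow_div_factorial _).mul_left (1 / a))
  have hexp :=
    (NormedSpace.expSeries_div_hasSum_exp ((-b / (4 * a) : ℝ) : ℂ)).mul_left (1 / a : ℂ)
  rw [← Complex.exp_eq_exp_ℂ, ← ofReal_exp] at hexp
  simp only [hterm] at hlaplace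
  rw [hlaplace.unique hexp]
end

section
/- Let (y_L)_{L>0} be real numbers with y_L > 1 satisfying, for each L, ρ̄ = (N_i/L^d)(1/(y_L − 1) + S_L) + ρ_L, where S_L := ∑_{k ∈ Γ_L^d \ {0}} 1/(y_L e^{βF(k)} − 1) ≤ ∑_{k ∈ Γ_L^d \ {0}} (1/(y_L−1)) e^{−βF(k)}, ρ_L ≥ 0, and lim sup_L ρ_L < ρ̄. Suppose sup_L (1/L^d) ∑_{k ∈ Γ_L^d} e^{−βF(k)} < ∞. Then y_L − 1 ≤ (N_i/(ρ̄ − ρ_L)) · (1/L^d)(1 + ∑_{k ∈ Γ_L^d} e^{−βF(k)}), hence the sequence (y_L) is bounded and admits a subsequence converging to some y_∞ ≥ 1. -/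
/-!
Multiplying the density equation by `y_L - 1` and using `(y_L - 1) S_L ≤ E_L` gives
`(y_L - 1)(ρ̄ - ρ_L) ≤ (N_i / L^d)(1 + E_L)`, which is the explicit bound. Since
`lim sup ρ_L < ρ̄`, the factor `ρ̄ - ρ_L` is eventually bounded below by a positive
constant, and `L^d ≥ 1` together with `sup_L E_L / L^d < ∞` bounds the other factor; so
`(y_L)` is bounded, lives in a compact interval `[1, B]`, and Bolzano–Weierstrass applies.
-/

open Filter Topology

theorem sub_one_le_of_density {y s e r ρ N V : ℝ} (hy : 1 < y) (hN : 0 ≤ N) (hV : 0 < V)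
    (hs : s ≤ e / (y - 1)) (hr : r < ρ) (hρ : ρ = N / V * (1 / (y - 1) + s) + r) :
    y - 1 ≤ N / (ρ - r) * (1 / V * (1 + e)) := by
  have hy₁ : 0 < y - 1 := sub_pos.mpr hy
  have hsy : (y - 1) * s ≤ e := (le_div_iff₀' hy₁).mp hs
  have hgap : (y - 1) * (ρ - r) ≤ N / V * (1 + e) := by
    calc (y - 1) * (ρ - r) = N / V * (1 + (y - 1) * s) := by
          rw [hρ]; field_simp; ring
      _ ≤ N / V * (1 + e) := by gcongr
  have hrearrange : N / (ρ - r) * (1 / V * (1 + e)) = N / V * (1 + e) / (ρ - r) := by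
    field_simp
  rwa [hrearrange, le_div_iff₀ (sub_pos.mpr hr)]

theorem bddAbove_range_of_le_div_sub_mul {a b r : ℕ → ℝ} {N ρ B : ℝ} (hN : 0 ≤ N)
    (ha : ∀ n, a n ≤ N / (ρ - r n) * b n) (hb₀ : ∀ n, 0 ≤ b n) (hb : ∀ n, b n ≤ B)
    (hr : ∀ n, r n < ρ) (hlim : limsup r atTop < ρ) : BddAbove (Set.range a) := by
  obtain ⟨c, hlim_c, hcρ⟩ := exists_between hlim
  have hrc : ∀ᶠ n in atTop, r n < c :=
    eventually_lt_of_limsup_lt hlim_c (isBoundedUnder_of ⟨ρ, fun n => (hr n).le⟩)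
  refine IsBoundedUnder.bddAbove_range ⟨N / (ρ - c) * B, eventually_map.mpr ?_⟩
  filter_upwards [hrc] with n hn
  calc a n ≤ N / (ρ - r n) * b n := ha n
    _ ≤ N / (ρ - c) * B :=
      mul_le_mul (div_le_div_of_nonneg_left hN (sub_pos.mpr hcρ) (by linarith)) (hb n)
        (hb₀ n) (div_nonneg hN (sub_pos.mpr hcρ).le)

theorem exists_subseq_tendsto_of_bddAbove {y : ℕ → ℝ} {a : ℝ} (hy : ∀ n, a ≤ y n)
    (hbdd : BddAbove (Set.range y)) :
    ∃ l : ℝ, a ≤ l ∧ ∃ φ : ℕ → ℕ, StrictMono φ ∧ Tendsto (y ∘ φ) atTop (𝓝 l) := by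
  obtain ⟨B, hB⟩ := hbdd
  obtain ⟨l, hl, hφ⟩ := (isCompact_Icc (a := a) (b := B)).tendsto_subseq
    fun n => ⟨hy n, hB ⟨n, rfl⟩⟩
  exact ⟨l, hl.1, hφ⟩

theorem fugacity_bounded_subsequence_general (d Ni : ℕ)
    (ρbar : ℝ)
    (y S ρL E : ℕ → ℝ) (L : ℕ → ℝ) (hL : ∀ n, L n = (n : ℝ) + 1)
    (hy : ∀ n, 1 < y n)
    (hEnn : ∀ n, 0 ≤ E n)
    (hS : ∀ n, S n ≤ E n / (y n - 1))
    (hρLlt : ∀ n, ρL n < ρbar)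
    (hlimsup : Filter.limsup ρL atTop < ρbar)
    (hdensity : ∀ n, ρbar = ((Ni : ℝ) / (L n) ^ d) * (1 / (y n - 1) + S n) + ρL n)
    (hsup : ∃ M : ℝ, ∀ n, (1 / (L n) ^ d) * E n ≤ M) :
    (∀ n, y n - 1 ≤
        ((Ni : ℝ) / (ρbar - ρL n)) * ((1 / (L n) ^ d) * (1 + E n))) ∧
      BddAbove (Set.range y) ∧
      ∃ yinf : ℝ, 1 ≤ yinf ∧ ∃ φ : ℕ → ℕ, StrictMono φ ∧
        Tendsto (y ∘ φ) atTop (nhds yinf) := by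
  have hvol : ∀ n, 1 ≤ L n ^ d := fun n =>
    one_le_pow₀ (by rw [hL]; linarith [(n.cast_nonneg : (0 : ℝ) ≤ n)])
  have hbound : ∀ n, y n - 1 ≤ (Ni : ℝ) / (ρbar - ρL n) * (1 / L n ^ d * (1 + E n)) :=
    fun n => sub_one_le_of_density (hy n) Ni.cast_nonneg (by linarith [hvol n]) (hS n)
      (hρLlt n) (hdensity n)
  obtain ⟨M, hM⟩ := hsup
  have hfactor : ∀ n, 1 / L n ^ d * (1 + E n) ≤ 1 + M := fun n => by
    have : 1 / L n ^ d ≤ 1 := (div_le_one (by linarith [hvol n])).mpr (hvol n)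
    linarith [hM n, mul_add (1 / L n ^ d) 1 (E n)]
  obtain ⟨C, hC⟩ := bddAbove_range_of_le_div_sub_mul Ni.cast_nonneg hbound
    (fun n => mul_nonneg (div_nonneg zero_le_one (by linarith [hvol n])) (by linarith [hEnn n])) hfactor hρLlt hlimsup
  have hbdd : BddAbove (Set.range y) :=
    ⟨C + 1, by rintro _ ⟨n, rfl⟩; linarith [hC ⟨n, rfl⟩]⟩
  exact ⟨hbound, hbdd, exists_subseq_tendsto_of_bddAbove (fun n => (hy n).le) hbdd⟩

/-- Compactness step for the finite-volume fugacities: under the density equation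
`ρ̄ = (N_i/L^d)(1/(y_L − 1) + S_L) + ρ_L` with `S_L ≤ E_L/(y_L − 1)`
(`E_L = ∑_{k∈Γ_L^d} e^{−βF(k)}`), one gets the explicit bound
`y_L − 1 ≤ (N_i/(ρ̄ − ρ_L))·(1/L^d)(1 + E_L)`, hence `(y_L)` is bounded and
has a subsequence converging to some `y_∞ ≥ 1`. Here `L = L n := n + 1`. -/
theorem fugacity_bounded_subsequence (d Ni : ℕ) (hd : 0 < d) (hNi : 0 < Ni)
    (ρbar : ℝ) (hρbar : 0 < ρbar)
    (y S ρL E : ℕ → ℝ) (L : ℕ → ℝ) (hL : ∀ n, L n = (n : ℝ) + 1)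
    (hy : ∀ n, 1 < y n)
    (hEnn : ∀ n, 0 ≤ E n)
    (hSnn : ∀ n, 0 ≤ S n)
    (hS : ∀ n, S n ≤ E n / (y n - 1))
    (hρLnn : ∀ n, 0 ≤ ρL n)
    (hρLlt : ∀ n, ρL n < ρbar)
    (hlimsup : Filter.limsup ρL atTop < ρbar)
    (hdensity : ∀ n, ρbar = ((Ni : ℝ) / (L n) ^ d) * (1 / (y n - 1) + S n) + ρL n)
    (hsup : ∃ M : ℝ, ∀ n, (1 / (L n) ^ d) * E n ≤ M) :
    (∀ n, y n - 1 ≤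
        ((Ni : ℝ) / (ρbar - ρL n)) * ((1 / (L n) ^ d) * (1 + E n))) ∧
      BddAbove (Set.range y) ∧
      ∃ yinf : ℝ, 1 ≤ yinf ∧ ∃ φ : ℕ → ℕ, StrictMono φ ∧
        Tendsto (y ∘ φ) atTop (nhds yinf) :=
  fugacity_bounded_subsequence_general d Ni ρbar y S ρL E L hL hy hEnn hS hρLlt hlimsup hdensity
    hsup
end

section
/- For c > 0 and w ∈ ℂ, e^{−(1/4) c |w|²} = ∫_0^∞ dr ∫_0^{2π} (dθ/(2π)) e^{−r} exp[i (√(c r)/2)(e^{iθ} w + conj(e^{iθ} w))], i.e., the centered Gaussian characteristic function is the χ-average over (r,θ) of the pure phases exp[i √(cr) Re(e^{iθ} w)]. -/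
/-!
Substituting `r = s²` turns `e^{-r} dr dθ / (2π)` into `π⁻¹ e^{-s²} s ds dθ`, the standard
Gaussian density on `ℂ ≅ ℝ²` written in polar coordinates `v = s e^{iθ}`, and the phase becomes
`exp (i Re (v √c w))`. The average is therefore the Fourier transform of the two-dimensional
standard Gaussian at `√c w̄`, which is `e^{-c|w|²/4}`.
-/

open MeasureTheory Real Complex Set ComplexConjugate

theorem integral_comp_sq_Ioi {E : Type*} [NormedAddCommGroup E] [NormedSpace ℝ E] (g : ℝ → E) :
    ∫ s in Ioi 0, (2 * s) • g (s ^ 2) = ∫ r in Ioi 0, g r := by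
  have h := integral_comp_rpow_Ioi_of_pos (g := g) two_pos
  norm_num at h
  simpa [Real.rpow_natCast] using h

theorem integrableOn_comp_polarCoord_symm {E : Type*} [NormedAddCommGroup E] [NormedSpace ℝ E]
    {f : ℝ × ℝ → E} (hf : Integrable f) :
    IntegrableOn (fun p ↦ p.1 • f (polarCoord.symm p)) polarCoord.target := by
  have h := (integrableOn_image_iff_integrableOn_abs_det_fderiv_smul volume
    (measurableSet_Ioi.prod measurableSet_Ioo)
    (fun p _ ↦ (hasFDerivAt_polarCoord_symm p).hasFDerivWithinAt) polarCoord.symm.injOn f).mp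
    (polarCoord.symm_image_target_eq_source ▸ hf.integrableOn)
  simp_rw [det_fderivPolarCoordSymm] at h
  refine h.congr_fun (fun p (hp : p ∈ polarCoord.target) ↦ ?_) polarCoord.open_target.measurableSet
  simp only [abs_of_pos (mem_Ioi.mp hp.1)]

theorem Complex.integrableOn_comp_polarCoord_symm {E : Type*} [NormedAddCommGroup E]
    [NormedSpace ℝ E] {f : ℂ → E} (hf : Integrable f) :
    IntegrableOn (fun p ↦ p.1 • f (Complex.polarCoord.symm p)) polarCoord.target :=
  _root_.integrableOn_comp_polarCoord_symm <|
    (volume_preserving_equiv_real_prod.symm.integrable_comp_emb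
      measurableEquivRealProd.symm.measurableEmbedding).mpr hf

theorem Complex.integral_eq_integral_radius_integral_angle {E : Type*} [NormedAddCommGroup E]
    [NormedSpace ℝ E] [CompleteSpace E] {f : ℂ → E} (hf : Integrable f) :
    ∫ v, f v = ∫ s in Ioi (0 : ℝ), s • ∫ θ in 0..2 * π, f (s * cexp (I * θ)) := by
  rw [← Complex.integral_comp_polarCoord_symm, polarCoord_target, Measure.volume_eq_prod,
    setIntegral_prod _ (Complex.integrableOn_comp_polarCoord_symm hf)]
  refine setIntegral_congr_fun measurableSet_Ioi fun s _ ↦ ?_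
  have hper : Function.Periodic (fun θ : ℝ ↦ f (s * cexp (I * θ))) (2 * π) := fun θ ↦ by
    simp [add_mul, Complex.exp_add, mul_comm I]
  have hshift :
      ∫ θ in 0..2 * π, f (s * cexp (I * θ)) = ∫ θ in Ioo (-π) π, f (s * cexp (I * θ)) := by
    rw [← zero_add (2 * π), hper.intervalIntegral_add_eq 0 (-π), show -π + 2 * π = π by ring,
      intervalIntegral.integral_of_le (by linarith [pi_pos]), integral_Ioc_eq_integral_Ioo]
  rw [integral_smul, hshift]
  refine congrArg _ (setIntegral_congr_fun measurableSet_Ioo fun θ _ ↦ ?_)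
  simp [Complex.polarCoord_symm_apply, mul_comm I, Complex.exp_mul_I]

noncomputable def gaussianPhase (w v : ℂ) : ℂ :=
  cexp (-‖v‖ ^ 2 + I * (v * w).re)

theorem integrable_gaussianPhase (w : ℂ) : Integrable (gaussianPhase w) := by
  unfold gaussianPhase
  simpa [ Complex.inner, mul_comm] using
    GaussianFourier.integrable_cexp_neg_mul_sq_norm_add (V := ℂ) (b := 1) (by simp) I (conj w)

theorem integral_gaussianPhase (w : ℂ) :
    ∫ v, gaussianPhase w v = π * cexp (-‖w‖ ^ 2 / 4) := by
  simpa [gaussianPhase, Complex.inner, Complex.finrank_real_complex, mul_comm] using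
    GaussianFourier.integral_cexp_neg_mul_sq_norm_add (V := ℂ) (b := 1) (by simp) I (conj w)

theorem gaussianPhase_sqrt_mul_polar (c : ℝ) (w : ℂ) {s : ℝ} (hs : 0 ≤ s) (θ : ℝ) :
    gaussianPhase (√c * w) (s * cexp (I * θ)) = Real.exp (-s ^ 2) *
      cexp (I * ((√(c * s ^ 2) : ℂ) / 2) * (cexp (I * θ) * w + conj (cexp (I * θ) * w))) := by
  have hnorm : ‖(s : ℂ) * cexp (I * θ)‖ = s := by
    rw [norm_mul, Complex.norm_real, mul_comm I, Complex.norm_exp_ofReal_mul_I, mul_one,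
      Real.norm_of_nonneg hs]
  have hre : ((s : ℂ) * cexp (I * θ) * (√c * w)).re = √(c * s ^ 2) * (cexp (I * θ) * w).re := by
    rw [sqrt_mul' c (sq_nonneg s), sqrt_sq hs, show (s : ℂ) * cexp (I * θ) * (√c * w) =
      ((s * √c : ℝ) : ℂ) * (cexp (I * θ) * w) by push_cast; ring, re_ofReal_mul]
    ring
  simp only [gaussianPhase, hnorm, hre, Complex.add_conj, ofReal_exp, ← Complex.exp_add]
  push_cast
  ring_nf

/-- The centered Gaussian characteristic function is the `χ`-average of pure phases:
for `c > 0` and `w ∈ ℂ`,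
`e^{−(1/4)c|w|²} = ∫_0^∞ ∫_0^{2π} (1/(2π)) e^{−r} exp[i(√(cr)/2)(e^{iθ}w + conj(e^{iθ}w))] dθ dr`. -/
theorem gaussian_as_phase_average (c : ℝ) (hc : 0 < c) (w : ℂ) :
    (Real.exp (-(1 / 4) * c * ‖w‖ ^ 2) : ℂ) =
      ∫ r in Set.Ioi (0:ℝ),
        (Real.exp (-r) : ℂ) * (1 / (2 * π) : ℂ) *
          ∫ θ in (0:ℝ)..(2 * π),
            Complex.exp (Complex.I * ((Real.sqrt (c * r) : ℂ) / 2) *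
              (Complex.exp (Complex.I * θ) * w +
                (starRingEnd ℂ) (Complex.exp (Complex.I * θ) * w))) := by
  have hnorm : ‖(√c : ℂ) * w‖ ^ 2 = c * ‖w‖ ^ 2 := by
    rw [norm_mul, Complex.norm_real, Real.norm_of_nonneg (sqrt_nonneg c), mul_pow, sq_sqrt hc.le]
  symm
  calc _ = ∫ s in Ioi (0 : ℝ), (π : ℂ)⁻¹ *
        (s • ∫ θ in 0..2 * π, gaussianPhase (√c * w) (s * cexp (I * θ))) := by
        rw [← integral_comp_sq_Ioi]
        refine setIntegral_congr_fun measurableSet_Ioi fun s (hs : 0 < s) ↦ ?_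
        simp only [gaussianPhase_sqrt_mul_polar c w hs.le, intervalIntegral.integral_const_mul,
          Complex.real_smul]
        generalize (∫ θ in (0 : ℝ)..2 * π, _ : ℂ) = J
        push_cast
        ring
    _ = (π : ℂ)⁻¹ * ∫ v, gaussianPhase (√c * w) v := by
        rw [integral_const_mul, ← Complex.integral_eq_integral_radius_integral_angle
          (integrable_gaussianPhase _)]
    _ = _ := by
        rw [integral_gaussianPhase, ← ofReal_pow, hnorm, ← mul_assoc,
          inv_mul_cancel₀ (ofReal_ne_zero.mpr pi_ne_zero), one_mul]
        push_cast
        ring_nf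
end

section
/- Let A be a self-adjoint operator on a Hilbert space K, Ψ an entire analytic vector for a self-adjoint operator B such that all iterated commutators δ_A^n(B) := [A,[A,...,[A,B]...]] vanish for n ≥ 3, with δ_A(B) and δ_A²(B) bounded on a suitable dense domain. Then e^{iαA} B e^{−iαA} = B + iα[A,B] − (α²/2)[A,[A,B]] as an operator identity on that domain, for every α ∈ ℝ. -/
/-!
Both `t ↦ exp (t • X) * B * exp (-(t • X))` and the quadratic polynomial
`g t = B + t • ⁅X, B⁆ + (t ^ 2 / 2) • ⁅X, ⁅X, B⁆⁆` solve the Heisenberg equation `g' = ⁅X, g⁆`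
with `g 0 = B`; for the polynomial this is exactly where `⁅X, ⁅X, ⁅X, B⁆⁆⁆ = 0` enters.
Solutions agree because `exp (-(t • X)) * g t * exp (t • X)` has derivative zero.
-/

open NormedSpace

section

variable {𝕂 𝔸 : Type*} [RCLike 𝕂] [NormedRing 𝔸] [NormedAlgebra 𝕂 𝔸]

attribute [local instance] LieRing.ofAssociativeRing

theorem hasDerivAt_quadratic_lie_of_lie_lie_lie_eq_zero (X B : 𝔸) (h3 : ⁅X, ⁅X, ⁅X, B⁆⁆⁆ = 0)
    (t : 𝕂) :
    HasDerivAt (fun s : 𝕂 => B + s • ⁅X, B⁆ + (s ^ 2 / 2) • ⁅X, ⁅X, B⁆⁆)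
      ⁅X, B + t • ⁅X, B⁆ + (t ^ 2 / 2) • ⁅X, ⁅X, B⁆⁆⁆ t := by
  refine (((hasDerivAt_id' t).smul_const ⁅X, B⁆).const_add B |>.add
    ((((hasDerivAt_id' t).pow 2).div_const 2).smul_const ⁅X, ⁅X, B⁆⁆)).congr_deriv ?_
  rw [lie_add, lie_add, lie_smul, lie_smul, h3, smul_zero, add_zero]
  norm_num

variable [CompleteSpace 𝔸]

theorem hasDerivAt_exp_smul_neg_mul_mul_exp_smul {g : 𝕂 → 𝔸} {g' : 𝔸} (X : 𝔸) {t : 𝕂}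
    (hg : HasDerivAt g g' t) :
    HasDerivAt (fun s : 𝕂 => exp (s • -X) * g s * exp (s • X))
      (exp (t • -X) * (g' - ⁅X, g t⁆) * exp (t • X)) t := by
  refine (((hasDerivAt_exp_smul_const (-X) t).mul hg).mul
    (hasDerivAt_exp_smul_const' X t)).congr_deriv ?_
  rw [Pi.mul_apply, Ring.lie_def]
  noncomm_ring

theorem exp_smul_mul_mul_exp_neg_smul_of_hasDerivAt_lie {g : 𝕂 → 𝔸} (X : 𝔸)
    (hg : ∀ t, HasDerivAt g ⁅X, g t⁆ t) (t : 𝕂) :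
    exp (t • X) * g 0 * exp (-(t • X)) = g t := by
  have hconst : exp (t • -X) * g t * exp (t • X) = g 0 := by
    simpa using is_const_of_deriv_eq_zero
      (fun s => (hasDerivAt_exp_smul_neg_mul_mul_exp_smul X (hg s)).differentiableAt)
      (fun s => by simpa using (hasDerivAt_exp_smul_neg_mul_mul_exp_smul X (hg s)).deriv) t 0
  have hinv : exp (t • X) * exp (-(t • X)) = 1 := by
    have hball (y : 𝔸) : y ∈ Metric.eball 0 (expSeries 𝕂 𝔸).radius :=
      (expSeries_radius_eq_top 𝕂 𝔸).symm ▸ edist_lt_top _ _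
    rw [← exp_add_of_commute_of_mem_ball (Commute.refl _).neg_right (hball _) (hball _),
      add_neg_cancel, NormedSpace.exp_zero]
  rw [← hconst, smul_neg]
  calc exp (t • X) * (exp (-(t • X)) * g t * exp (t • X)) * exp (-(t • X))
      = (exp (t • X) * exp (-(t • X))) * g t * (exp (t • X) * exp (-(t • X))) := by
        noncomm_ring
    _ = g t := by rw [hinv, one_mul, mul_one]

theorem exp_smul_mul_mul_exp_neg_smul_of_lie_lie_lie_eq_zero {X B : 𝔸}
    (h3 : ⁅X, ⁅X, ⁅X, B⁆⁆⁆ = 0) (t : 𝕂) :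
    exp (t • X) * B * exp (-(t • X)) = B + t • ⁅X, B⁆ + (t ^ 2 / 2) • ⁅X, ⁅X, B⁆⁆ := by
  simpa using exp_smul_mul_mul_exp_neg_smul_of_hasDerivAt_lie X
    (hasDerivAt_quadratic_lie_of_lie_lie_lie_eq_zero X B h3) t

end

theorem terminating_BCH_general
    {H : Type*} [NormedAddCommGroup H] [InnerProductSpace ℂ H] [CompleteSpace H]
    (A B : H →L[ℂ] H)
    (h3 : ⁅A, ⁅A, ⁅A, B⁆⁆⁆ = 0) (α : ℝ) :
    NormedSpace.exp ((α : ℂ) • Complex.I • A) * B *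
        NormedSpace.exp (-((α : ℂ) • Complex.I • A)) =
      B + ((α : ℂ) * Complex.I) • ⁅A, B⁆ -
        ((α : ℂ) ^ 2 / 2) • ⁅A, ⁅A, B⁆⁆ := by
  have hsq : ((α : ℂ) * Complex.I) ^ 2 / 2 = -((α : ℂ) ^ 2 / 2) := by
    rw [mul_pow, Complex.I_sq]; ring
  rw [smul_smul, exp_smul_mul_mul_exp_neg_smul_of_lie_lie_lie_eq_zero h3, hsq, neg_smul,
    ← sub_eq_add_neg]

/-- Terminating Baker–Campbell–Hausdorff identity: if the iterated commutators
`δ_A^n(B)` vanish for `n ≥ 3` (equivalently `[A,[A,[A,B]]] = 0`), then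
`e^{iαA} B e^{−iαA} = B + iα[A,B] − (α²/2)[A,[A,B]]` for every `α ∈ ℝ`.
Formalized for (bounded) operators on a complex Hilbert space, the self-adjointness
of `A` making `e^{iαA}` unitary. -/
theorem terminating_BCH
    {H : Type*} [NormedAddCommGroup H] [InnerProductSpace ℂ H] [CompleteSpace H]
    (A B : H →L[ℂ] H) (hA : IsSelfAdjoint A)
    (h3 : ⁅A, ⁅A, ⁅A, B⁆⁆⁆ = 0) (α : ℝ) :
    NormedSpace.exp ((α : ℂ) • Complex.I • A) * B *
        NormedSpace.exp (-((α : ℂ) • Complex.I • A)) =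
      B + ((α : ℂ) * Complex.I) • ⁅A, B⁆ -
        ((α : ℂ) ^ 2 / 2) • ⁅A, ⁅A, B⁆⁆ :=
  terminating_BCH_general A B h3 α
end
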